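/- Let X be the constructed set and X_1, ..., X_r a Tverberg partition of X. Then for each 1 ≤ i ≤ r, the set X_i ∩ A contains exactly one point. -/

import Mathlib

open Finset Set

/-- The standard basis vector `e^j` of `ℝ^d`. -/
noncomputable def stdVec (d : ℕ) (j : Fin d) : Fin d → ℝ := Pi.single j 1

/-- The set `A_j = {e^j, 2e^j, ..., (r-1)e^j}`. -/
def Aset (d r : ℕ) (j : Fin d) : Set (Fin d → ℝ) :=
  {v | ∃ k : ℕ, 1 ≤ k ∧ k ≤ r - 1 ∧ v = (k : ℝ) • stdVec d j}

/-- The point `x^i`, with `x^i_j = 0` if `i = i(j)` and `x^i_j = -i` otherwise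
(indices taken in `{1,...,r}`, so `Fin r` index `i` corresponds to `i+1`). -/
def xpt (d r : ℕ) (ι : Fin d → Fin r) (i : Fin r) : Fin d → ℝ :=
  fun j => if ι j = i then 0 else -((i : ℕ) + 1 : ℝ)

/-- The set `A = {x^1, ..., x^r}`. -/
def Apts (d r : ℕ) (ι : Fin d → Fin r) : Set (Fin d → ℝ) := Set.range (xpt d r ι)

/-- The constructed set `X = A ∪ A_1 ∪ ⋯ ∪ A_d`. -/
def Xset (d r : ℕ) (ι : Fin d → Fin r) : Set (Fin d → ℝ) :=
  Apts d r ι ∪ ⋃ j, Aset d r j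

/-- `P : Fin r → Set (Fin d → ℝ)` is a Tverberg partition of `X`:
a partition of `X` into pairwise disjoint parts whose convex hulls share a point. -/
def IsTverbergPartition (d r : ℕ) (X : Set (Fin d → ℝ))
    (P : Fin r → Set (Fin d → ℝ)) : Prop :=
  (⋃ i, P i) = X ∧ (∀ i i', i ≠ i' → Disjoint (P i) (P i')) ∧
    ∃ p : Fin d → ℝ, ∀ i, p ∈ convexHull ℝ (P i)

/-!
If some part of a Tverberg partition misses `A`, it lies in `A_1 ∪ ⋯ ∪ A_d`, where the coordinate
sum is at least `1`; so the common point `p` has a positive coordinate `p_j`. Every point of `X`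
outside `A_j` has nonpositive `j`-th coordinate, hence each of the `r` disjoint parts must contain
a point of `A_j`, which has only `r - 1` points. So every part meets `A`, and as `A` has at most
`r` points, each part meets it exactly once.
-/

open Function

section Pigeonhole

variable {ι α : Type*} {P : ι → Set α} {S : Set α}

lemma exists_injective_mem_of_inter_nonempty (hdisj : Pairwise (Disjoint on P))
    (hmeet : ∀ i, (P i ∩ S).Nonempty) :
    ∃ f : ι → S, Injective f ∧ ∀ i, (f i : α) ∈ P i := by
  choose f hf using hmeet
  refine ⟨fun i => ⟨f i, (hf i).2⟩, fun i i' hii' => ?_, fun i => (hf i).1⟩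
  have heq : f i = f i' := congrArg Subtype.val hii'
  by_contra hne
  exact Set.disjoint_left.mp (hdisj hne) (hf i).1 (heq ▸ (hf i').1)

lemma card_le_ncard_of_inter_nonempty (hS : S.Finite) (hdisj : Pairwise (Disjoint on P))
    (hmeet : ∀ i, (P i ∩ S).Nonempty) : Nat.card ι ≤ S.ncard := by
  obtain ⟨f, hf, -⟩ := exists_injective_mem_of_inter_nonempty hdisj hmeet
  have := hS.to_subtype
  exact Nat.card_le_card_of_injective f hf

lemma ncard_inter_eq_one_of_ncard_le (hS : S.Finite) (hcard : S.ncard ≤ Nat.card ι)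
    (hdisj : Pairwise (Disjoint on P)) (hmeet : ∀ i, (P i ∩ S).Nonempty) (i : ι) :
    (P i ∩ S).ncard = 1 := by
  obtain ⟨f, hf, hfP⟩ := exists_injective_mem_of_inter_nonempty hdisj hmeet
  have := hS.to_subtype
  have hsurj := (hf.bijective_of_nat_card_le hcard).2
  refine Set.ncard_eq_one.mpr ⟨f i, Set.eq_singleton_iff_unique_mem.mpr ⟨⟨hfP i, (f i).2⟩, ?_⟩⟩
  rintro x ⟨hxP, hxS⟩
  obtain ⟨j, hj⟩ := hsurj ⟨x, hxS⟩
  obtain rfl : j = i := by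
    by_contra hne
    exact Set.disjoint_left.mp (hdisj hne) (hfP j) (congrArg Subtype.val hj ▸ hxP)
  exact congrArg Subtype.val hj.symm

end Pigeonhole

section Construction

variable {d r : ℕ}

lemma Aset_eq_image (j : Fin d) :
    Aset d r j = (fun k : ℕ => (k : ℝ) • stdVec d j) '' Set.Icc 1 (r - 1) := by
  ext v
  simp only [Aset, Set.mem_ofPred_eq, Set.mem_image, Set.mem_Icc, and_assoc, eq_comm]

lemma Aset_finite (j : Fin d) : (Aset d r j).Finite := by
  rw [Aset_eq_image]
  exact (Set.finite_Icc _ _).image _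

lemma ncard_Aset_le (j : Fin d) : (Aset d r j).ncard ≤ r - 1 := by
  rw [Aset_eq_image]
  refine (Set.ncard_image_le (Set.finite_Icc _ _)).trans ?_
  rw [Set.ncard_Icc_nat]
  omega

lemma ncard_Apts_le (ι : Fin d → Fin r) : (Apts d r ι).ncard ≤ r := by
  calc (Apts d r ι).ncard = Nat.card (Set.range (xpt d r ι)) := rfl
    _ ≤ Nat.card (Fin r) := Finite.card_range_le _
    _ = r := Nat.card_fin r

lemma xpt_apply_nonpos (ι : Fin d → Fin r) (i : Fin r) (j : Fin d) : xpt d r ι i j ≤ 0 := by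
  unfold xpt
  split_ifs
  · rfl
  · linarith [(i : ℕ).cast_nonneg (α := ℝ)]

lemma one_le_sum_of_mem_Aset {j : Fin d} {v : Fin d → ℝ} (hv : v ∈ Aset d r j) :
    1 ≤ ∑ j', v j' := by
  obtain ⟨k, hk, -, rfl⟩ := hv
  simpa [stdVec, ← Finset.mul_sum] using (Nat.one_le_cast (α := ℝ)).mpr hk

lemma apply_eq_zero_of_mem_Aset {j j' : Fin d} (hjj' : j ≠ j') {v : Fin d → ℝ}
    (hv : v ∈ Aset d r j) : v j' = 0 := by
  obtain ⟨k, -, -, rfl⟩ := hv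
  simp [stdVec, hjj'.symm]

lemma exists_pos_apply_of_mem_convexHull {s : Set (Fin d → ℝ)} (hs : s ⊆ ⋃ j, Aset d r j)
    {p : Fin d → ℝ} (hp : p ∈ convexHull ℝ s) : ∃ j, 0 < p j := by
  have hsum_linear : IsLinearMap ℝ (fun v : Fin d → ℝ => ∑ j, v j) :=
    ⟨fun v w => by simp [Finset.sum_add_distrib], fun c v => by simp [Finset.mul_sum]⟩
  have hsum : 1 ≤ ∑ j, p j := by
    refine convexHull_min (fun v hv => ?_) (convex_halfSpace_ge hsum_linear 1) hp
    obtain ⟨j, hvj⟩ := Set.mem_iUnion.mp (hs hv)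
    exact one_le_sum_of_mem_Aset hvj
  by_contra! hnonpos
  linarith [Finset.sum_nonpos fun j (_ : j ∈ Finset.univ) => hnonpos j]

lemma apply_nonpos_of_mem_convexHull {ι : Fin d → Fin r} {s : Set (Fin d → ℝ)}
    (hs : s ⊆ Xset d r ι) {j : Fin d} (hsj : Disjoint s (Aset d r j)) {p : Fin d → ℝ}
    (hp : p ∈ convexHull ℝ s) : p j ≤ 0 := by
  refine convexHull_min (fun v hv => ?_) (convex_halfSpace_le (LinearMap.proj j).isLinear 0) hp
  rcases hs hv with ⟨i, rfl⟩ | hvA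
  · exact xpt_apply_nonpos ι i j
  · obtain ⟨j', hvj'⟩ := Set.mem_iUnion.mp hvA
    have hj'j : j' ≠ j := by
      rintro rfl
      exact Set.disjoint_left.mp hsj hv hvj'
    exact (apply_eq_zero_of_mem_Aset hj'j hvj').le

lemma IsTverbergPartition.inter_Apts_nonempty {ι : Fin d → Fin r} {P : Fin r → Set (Fin d → ℝ)}
    (hTP : IsTverbergPartition d r (Xset d r ι) P) (i : Fin r) : (P i ∩ Apts d r ι).Nonempty := by
  obtain ⟨hcover, hdisj, p, hp⟩ := hTP
  have hsubX : ∀ i, P i ⊆ Xset d r ι := fun i => hcover ▸ Set.subset_iUnion P i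
  by_contra! hi
  have hsub : P i ⊆ ⋃ j, Aset d r j := fun v hv =>
    (hsubX i hv).resolve_left fun hvA => hi.subset ⟨hv, hvA⟩
  obtain ⟨j, hpj⟩ := exists_pos_apply_of_mem_convexHull hsub (hp i)
  have hmeetsAj : ∀ i', (P i' ∩ Aset d r j).Nonempty := fun i' => by
    by_contra! hempty
    exact (apply_nonpos_of_mem_convexHull (hsubX i')
      (Set.disjoint_iff_inter_eq_empty.mpr hempty) (hp i')).not_gt hpj
  have hcard := card_le_ncard_of_inter_nonempty (Aset_finite j) hdisj hmeetsAj
  rw [Nat.card_fin] at hcard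
  have := ncard_Aset_le (r := r) j
  have := i.pos
  omega

end Construction

theorem part_meets_A_once_general (d r : ℕ)
    (ι : Fin d → Fin r)
    (P : Fin r → Set (Fin d → ℝ))
    (hTP : IsTverbergPartition d r (Xset d r ι) P) :
    ∀ i, (P i ∩ Apts d r ι).ncard = 1 :=
  ncard_inter_eq_one_of_ncard_le (Set.finite_range _)
    ((ncard_Apts_le ι).trans_eq (Nat.card_fin r).symm) hTP.2.1 hTP.inter_Apts_nonempty

/-- Corollary 3.2: in any Tverberg partition of the constructed set `X`,
each part meets `A` in exactly one point. -/
theorem part_meets_A_once (d r : ℕ) (hd : 1 ≤ d) (hr : 1 ≤ r)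
    (a : Fin r → ℕ) (hpos : ∀ i, 1 ≤ a i) (hle : ∀ i, a i ≤ d + 1)
    (hsum : ∑ i, a i = (d + 1) * (r - 1) + 1)
    (ι : Fin d → Fin r)
    (hι : ∀ i, (Finset.univ.filter fun j => ι j = i).card = d + 1 - a i)
    (P : Fin r → Set (Fin d → ℝ))
    (hTP : IsTverbergPartition d r (Xset d r ι) P) :
    ∀ i, (P i ∩ Apts d r ι).ncard = 1 :=
  part_meets_A_once_general d r ι P hTP
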